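/- Let G be a group with a normal subgroup N and quotient G/N ≅ ℤ, both N and G/N infinite, and suppose G is word hyperbolic with finite generating set A. Then N is not a quasiconvex subset of the Cayley graph Γ(G,A). -/

import Mathlib

def evalWord {A G : Type} [Group G] (a : A → G) (w : List A) : G :=
  (w.map a).prod

noncomputable def wlen {A G : Type} [Group G] (a : A → G) (g : G) : ℕ :=
  sInf {n | ∃ w : List A, evalWord a w = g ∧ w.length = n}

noncomputable def wdist {A G : Type} [Group G] (a : A → G) (g h : G) : ℕ :=
  wlen a (g⁻¹ * h)

def FourPointHyperbolic {A G : Type} [Group G] (a : A → G) (δ : ℝ) : Prop :=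
  ∀ x y z w : G, (wdist a x y : ℝ) + wdist a z w ≤
    max ((wdist a x z : ℝ) + wdist a y w) ((wdist a x w : ℝ) + wdist a y z) + 2 * δ

/-!
The height `(f x).toAdd` is Lipschitz on the Cayley graph, so quasiconvexity of `N = ker f`
bounds it on geodesics joining points of `N`. Take `g = t ^ m` with `f t = 1` and `h ∈ N` much
longer than `g`. Heights along the geodesic from `g` to `g * h` are close to `m`. But the
quadrilateral `1, g, g * h, g * h * g⁻¹` has two sides of length `|g|`, so by hyperbolicity the
midpoint of that geodesic lies within `4δ + 1` of a geodesic from `1` to `g * h * g⁻¹ ∈ N`,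
where heights are bounded independently of `m`.
-/

section

variable {A G : Type} [Group G] {a : A → G} {δ : ℝ}

theorem evalWord_append (a : A → G) (w₁ w₂ : List A) :
    evalWord a (w₁ ++ w₂) = evalWord a w₁ * evalWord a w₂ := by
  simp [evalWord]

theorem evalWord_cons (a : A → G) (x : A) (w : List A) :
    evalWord a (x :: w) = a x * evalWord a w := by
  simp [evalWord]

theorem wlen_evalWord_le (a : A → G) (w : List A) : wlen a (evalWord a w) ≤ w.length :=
  Nat.sInf_le ⟨w, rfl, rfl⟩

theorem wlen_one (a : A → G) : wlen a 1 = 0 :=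
  Nat.eq_zero_of_le_zero (wlen_evalWord_le a [])

theorem exists_evalWord_eq_length_eq_wlen (hgen : ∀ g : G, ∃ w : List A, evalWord a w = g)
    (g : G) : ∃ w : List A, evalWord a w = g ∧ w.length = wlen a g := by
  obtain ⟨w, hw⟩ := hgen g
  exact Nat.sInf_mem (s := {n | ∃ w : List A, evalWord a w = g ∧ w.length = n})
    ⟨w.length, w, hw, rfl⟩

theorem wlen_mul_le (hgen : ∀ g : G, ∃ w : List A, evalWord a w = g) (g h : G) :
    wlen a (g * h) ≤ wlen a g + wlen a h := by
  obtain ⟨u, rfl, hu⟩ := exists_evalWord_eq_length_eq_wlen hgen g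
  obtain ⟨v, rfl, hv⟩ := exists_evalWord_eq_length_eq_wlen hgen h
  rw [← hu, ← hv, ← List.length_append, ← evalWord_append]
  exact wlen_evalWord_le a _

theorem wlen_inv_le (hinv : ∀ x : A, ∃ y : A, a y = (a x)⁻¹)
    (hgen : ∀ g : G, ∃ w : List A, evalWord a w = g) (g : G) : wlen a g⁻¹ ≤ wlen a g := by
  choose ι hι using hinv
  obtain ⟨w, rfl, hw⟩ := exists_evalWord_eq_length_eq_wlen hgen g
  have hrev : evalWord a (w.map ι).reverse = (evalWord a w)⁻¹ := by
    simp [evalWord, List.prod_inv_reverse, Function.comp_def, hι]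
  simpa [hrev, hw] using wlen_evalWord_le a (w.map ι).reverse

theorem wlen_inv (hinv : ∀ x : A, ∃ y : A, a y = (a x)⁻¹)
    (hgen : ∀ g : G, ∃ w : List A, evalWord a w = g) (g : G) : wlen a g⁻¹ = wlen a g :=
  le_antisymm (wlen_inv_le hinv hgen g) (by simpa using wlen_inv_le hinv hgen g⁻¹)

theorem wdist_self_mul (a : A → G) (u x : G) : wdist a u (u * x) = wlen a x := by
  rw [wdist, inv_mul_cancel_left]

theorem wdist_comm (hinv : ∀ x : A, ∃ y : A, a y = (a x)⁻¹)
    (hgen : ∀ g : G, ∃ w : List A, evalWord a w = g) (x y : G) :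
    wdist a x y = wdist a y x := by
  rw [wdist, wdist, ← wlen_inv hinv hgen, mul_inv_rev, inv_inv]

theorem wdist_triangle (hgen : ∀ g : G, ∃ w : List A, evalWord a w = g) (x y z : G) :
    wdist a x z ≤ wdist a x y + wdist a y z := by
  have hsplit : x⁻¹ * z = (x⁻¹ * y) * (y⁻¹ * z) := by group
  rw [wdist, hsplit]
  exact wlen_mul_le hgen _ _

def IsGeodesicWord (a : A → G) (w : List A) : Prop :=
  w.length = wlen a (evalWord a w)

theorem isGeodesicWord_of_length_eq_wlen {w : List A} {g : G} (hw : evalWord a w = g)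
    (hl : w.length = wlen a g) :
    IsGeodesicWord a w := by
  rw [IsGeodesicWord, hw, hl]

theorem IsGeodesicWord.of_append (hgen : ∀ g : G, ∃ w : List A, evalWord a w = g)
    {w₁ w₂ : List A} (h : IsGeodesicWord a (w₁ ++ w₂)) :
    IsGeodesicWord a w₁ ∧ IsGeodesicWord a w₂ := by
  have hsub := wlen_mul_le hgen (evalWord a w₁) (evalWord a w₂)
  have h₁ := wlen_evalWord_le a w₁
  have h₂ := wlen_evalWord_le a w₂
  rw [IsGeodesicWord, List.length_append, evalWord_append] at h
  constructor <;> unfold IsGeodesicWord <;> omega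

theorem IsGeodesicWord.take (hgen : ∀ g : G, ∃ w : List A, evalWord a w = g)
    {w : List A} (hw : IsGeodesicWord a w) (j : ℕ) : IsGeodesicWord a (w.take j) :=
  (IsGeodesicWord.of_append hgen (by rwa [List.take_append_drop])).1

theorem IsGeodesicWord.drop (hgen : ∀ g : G, ∃ w : List A, evalWord a w = g)
    {w : List A} (hw : IsGeodesicWord a w) (j : ℕ) : IsGeodesicWord a (w.drop j) :=
  (IsGeodesicWord.of_append hgen (by rwa [List.take_append_drop])).2

theorem IsGeodesicWord.wdist_take (hgen : ∀ g : G, ∃ w : List A, evalWord a w = g)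
    {w : List A} (hw : IsGeodesicWord a w) (u : G) {j : ℕ} (hj : j ≤ w.length) :
    wdist a u (u * evalWord a (w.take j)) = j := by
  rw [wdist_self_mul, ← hw.take hgen j, List.length_take, min_eq_left hj]

theorem IsGeodesicWord.wdist_take_evalWord (hgen : ∀ g : G, ∃ w : List A, evalWord a w = g)
    {w : List A} (hw : IsGeodesicWord a w) (u : G) (j : ℕ) :
    wdist a (u * evalWord a (w.take j)) (u * evalWord a w) = w.length - j := by
  have hsplit : u * evalWord a w = u * evalWord a (w.take j) * evalWord a (w.drop j) := by
    rw [mul_assoc, ← evalWord_append, List.take_append_drop]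
  rw [hsplit, wdist_self_mul, ← hw.drop hgen j, List.length_drop]

noncomputable def gromovProduct (a : A → G) (w x y : G) : ℝ :=
  ((wdist a w x : ℝ) + wdist a w y - wdist a x y) / 2

theorem gromovProduct_comm (hinv : ∀ x : A, ∃ y : A, a y = (a x)⁻¹)
    (hgen : ∀ g : G, ∃ w : List A, evalWord a w = g) (w x y : G) :
    gromovProduct a w x y = gromovProduct a w y x := by
  rw [gromovProduct, gromovProduct, wdist_comm hinv hgen x y]
  ring

theorem wdist_sub_wdist_le_gromovProduct (hinv : ∀ x : A, ∃ y : A, a y = (a x)⁻¹)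
    (hgen : ∀ g : G, ∃ w : List A, evalWord a w = g) (w x y : G) :
    (wdist a w x : ℝ) - wdist a x y ≤ gromovProduct a w x y := by
  have htri : (wdist a w x : ℝ) ≤ wdist a w y + wdist a x y := by
    rw [wdist_comm hinv hgen x y]
    exact_mod_cast wdist_triangle hgen w y x
  unfold gromovProduct
  linarith

theorem FourPointHyperbolic.nonneg (hhyp : FourPointHyperbolic a δ) : 0 ≤ δ := by
  have h := hhyp 1 1 1 1
  simp only [wdist, inv_one, mul_one, wlen_one, Nat.cast_zero, add_zero, max_self] at h
  linarith

theorem FourPointHyperbolic.min_sub_le_gromovProduct (hinv : ∀ x : A, ∃ y : A, a y = (a x)⁻¹)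
    (hgen : ∀ g : G, ∃ w : List A, evalWord a w = g) (hhyp : FourPointHyperbolic a δ)
    (w x y z : G) :
    min (gromovProduct a w x y) (gromovProduct a w y z) - δ ≤ gromovProduct a w x z := by
  have h := sub_le_iff_le_add.mpr (hhyp x z y w)
  rw [wdist_comm hinv hgen z y, wdist_comm hinv hgen x w, wdist_comm hinv hgen y w,
    wdist_comm hinv hgen z w] at h
  have hxy := min_le_left (gromovProduct a w x y) (gromovProduct a w y z)
  have hyz := min_le_right (gromovProduct a w x y) (gromovProduct a w y z)
  unfold gromovProduct at hxy hyz ⊢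
  rcases le_max_iff.mp h with h | h <;> linarith

theorem FourPointHyperbolic.exists_wdist_take_le (hinv : ∀ x : A, ∃ y : A, a y = (a x)⁻¹)
    (hgen : ∀ g : G, ∃ w : List A, evalWord a w = g) (hhyp : FourPointHyperbolic a δ)
    {w : List A} (hw : IsGeodesicWord a w) (μ : G) :
    ∃ j, (wdist a μ (evalWord a (w.take j)) : ℝ) ≤
      gromovProduct a μ 1 (evalWord a w) + 2 * δ + 1 := by
  set L := w.length
  have hL : wdist a 1 (evalWord a w) = L := by
    rw [← one_mul (evalWord a w), wdist_self_mul, ← hw]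
  have h₁ := wdist_triangle hgen μ 1 (evalWord a w)
  have h₂ := wdist_triangle hgen μ (evalWord a w) 1
  rw [wdist_comm hinv hgen (evalWord a w), hL] at h₂
  obtain ⟨j, hj₁, hj₂⟩ : ∃ j, 2 * j + wdist a μ (evalWord a w) ≤ wdist a μ 1 + L ∧
      wdist a μ 1 + L ≤ 2 * j + wdist a μ (evalWord a w) + 1 :=
    ⟨(wdist a μ 1 + L - wdist a μ (evalWord a w)) / 2, by omega, by omega⟩
  have hjL : j ≤ L := by omega
  refine ⟨j, ?_⟩
  set q := evalWord a (w.take j)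
  have hq₁ : wdist a 1 q = j := by simpa [q] using hw.wdist_take hgen 1 hjL
  have hq₂ : (wdist a q (evalWord a w) : ℝ) = L - j := by
    rw [← Nat.cast_sub hjL, ← hw.wdist_take_evalWord hgen 1 j, one_mul, one_mul]
  have hj₁' : (2 * j + wdist a μ (evalWord a w) : ℝ) ≤ wdist a μ 1 + L := by
    exact_mod_cast hj₁
  have hj₂' : (wdist a μ 1 + L : ℝ) ≤ 2 * j + wdist a μ (evalWord a w) + 1 := by
    exact_mod_cast hj₂
  -- the choice of `j` balances the two Gromov products below
  have hbal : (wdist a μ q + gromovProduct a μ 1 (evalWord a w) - 1) / 2 ≤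
      min (gromovProduct a μ 1 q) (gromovProduct a μ q (evalWord a w)) := by
    apply le_min <;> simp only [gromovProduct, hL, hq₁, hq₂] <;> linarith
  linarith [hhyp.min_sub_le_gromovProduct hinv hgen μ 1 q (evalWord a w)]

theorem FourPointHyperbolic.gromovProduct_le_of_far (hinv : ∀ x : A, ∃ y : A, a y = (a x)⁻¹)
    (hgen : ∀ g : G, ∃ w : List A, evalWord a w = g) (hhyp : FourPointHyperbolic a δ)
    {μ p q r s : G} {L c : ℝ} (hps : (wdist a p s : ℝ) ≤ L) (hqr : (wdist a q r : ℝ) ≤ L)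
    (hp : L + c + δ < wdist a μ p) (hq : L + c + 2 * δ < wdist a μ q)
    (hpq : gromovProduct a μ p q ≤ c) :
    gromovProduct a μ s r ≤ c + 2 * δ := by
  have hps' := wdist_sub_wdist_le_gromovProduct hinv hgen μ p s
  have hqr' := wdist_sub_wdist_le_gromovProduct hinv hgen μ q r
  rw [gromovProduct_comm hinv hgen μ q r] at hqr'
  have hpsq := hhyp.min_sub_le_gromovProduct hinv hgen μ p s q
  have hsrq := hhyp.min_sub_le_gromovProduct hinv hgen μ s r q
  have hsq : gromovProduct a μ s q ≤ c + δ := by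
    rcases min_choice (gromovProduct a μ p s) (gromovProduct a μ s q) with h | h <;>
      rw [h] at hpsq <;> linarith
  rcases min_choice (gromovProduct a μ s r) (gromovProduct a μ r q) with h | h <;>
    rw [h] at hsrq <;> linarith

theorem FourPointHyperbolic.exists_wdist_conj_le (hinv : ∀ x : A, ∃ y : A, a y = (a x)⁻¹)
    (hgen : ∀ g : G, ∃ w : List A, evalWord a w = g) (hhyp : FourPointHyperbolic a δ)
    {g : G} {wh wy : List A} (hwh : IsGeodesicWord a wh) (hwy : IsGeodesicWord a wy)
    (hy : evalWord a wy = g * evalWord a wh * g⁻¹)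
    (hlong : 2 * (wlen a g : ℝ) + 4 * δ + 1 < wh.length) :
    ∃ j, (wdist a (g * evalWord a (wh.take (wh.length / 2))) (evalWord a (wy.take j)) : ℝ) ≤
      4 * δ + 1 := by
  set H := wh.length
  set i := H / 2
  set h := evalWord a wh
  set μ := g * evalWord a (wh.take i)
  have hδ := hhyp.nonneg
  have hi : (2 * i : ℝ) ≤ H ∧ (H : ℝ) ≤ 2 * i + 1 := by
    constructor <;> norm_cast <;> omega
  have hμg : wdist a μ g = i := by
    rw [wdist_comm hinv hgen, hwh.wdist_take hgen g (Nat.div_le_self H 2)]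
  have hμgh : (wdist a μ (g * h) : ℝ) = H - i := by
    rw [hwh.wdist_take_evalWord hgen g i, Nat.cast_sub (Nat.div_le_self H 2)]
  have hggh : wdist a g (g * h) = H := by rw [wdist_self_mul, ← hwh]
  have hg1 : (wdist a g 1 : ℝ) = wlen a g := by rw [wdist, mul_one, wlen_inv hinv hgen]
  have hghy : (wdist a (g * h) (g * h * g⁻¹) : ℝ) = wlen a g := by
    rw [wdist_self_mul, wlen_inv hinv hgen]
  have hpq : gromovProduct a μ g (g * h) ≤ 0 := by
    rw [gromovProduct, hμg, hμgh, hggh]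
    linarith
  have h1y := hhyp.gromovProduct_le_of_far hinv hgen hg1.le hghy.le
    (by rw [hμg]; linarith) (by rw [hμgh]; linarith) hpq
  obtain ⟨j, hj⟩ := hhyp.exists_wdist_take_le hinv hgen hwy μ
  rw [hy] at hj
  exact ⟨j, by linarith⟩

theorem Set.Infinite.exists_lt_wlen [Finite A] (hgen : ∀ g : G, ∃ w : List A, evalWord a w = g)
    {s : Set G} (hs : s.Infinite) (n : ℕ) : ∃ g ∈ s, n < wlen a g := by
  by_contra! hshort
  refine hs (((List.finite_length_le A n).image (evalWord a)).subset fun g hg => ?_)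
  obtain ⟨w, hw, hl⟩ := exists_evalWord_eq_length_eq_wlen hgen g
  exact ⟨w, (hl.trans_le (hshort g hg) : w.length ≤ n), hw⟩

theorem exists_abs_toAdd_evalWord_le [Finite A] (a : A → G) (f : G →* Multiplicative ℤ) :
    ∃ C : ℝ, 0 ≤ C ∧
      ∀ w : List A, |((f (evalWord a w)).toAdd : ℝ)| ≤ C * w.length := by
  obtain ⟨M, hM⟩ := (Set.finite_range fun x : A => |((f (a x)).toAdd : ℝ)|).bddAbove
  refine ⟨max M 0, le_max_right M 0, fun w => ?_⟩
  induction w with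
  | nil => simp [evalWord]
  | cons x w ih =>
    have hx : |((f (a x)).toAdd : ℝ)| ≤ max M 0 := (hM ⟨x, rfl⟩).trans (le_max_left M 0)
    rw [evalWord_cons, map_mul, toAdd_mul, Int.cast_add, List.length_cons, Nat.cast_succ]
    calc _ ≤ |((f (a x)).toAdd : ℝ)| + |((f (evalWord a w)).toAdd : ℝ)| := abs_add_le _ _
      _ ≤ max M 0 * (w.length + 1) := by linarith

theorem abs_toAdd_sub_le_mul_wdist (hgen : ∀ g : G, ∃ w : List A, evalWord a w = g)
    {f : G →* Multiplicative ℤ} {C : ℝ}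
    (hC : ∀ w : List A, |((f (evalWord a w)).toAdd : ℝ)| ≤ C * w.length) (x y : G) :
    |((f y).toAdd : ℝ) - (f x).toAdd| ≤ C * wdist a x y := by
  obtain ⟨w, hw, hl⟩ := exists_evalWord_eq_length_eq_wlen hgen (x⁻¹ * y)
  have h := hC w
  rw [hw, hl, map_mul, map_inv, toAdd_mul, toAdd_inv, Int.cast_add, Int.cast_neg] at h
  rw [wdist, sub_eq_neg_add]
  exact h

end

theorem infinite_normal_kernel_not_quasiconvex_general
    {A G : Type} [Fintype A] [Group G] (a : A → G)
    (hinv : ∀ x : A, ∃ y : A, a y = (a x)⁻¹)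
    (hgen : ∀ g : G, ∃ w : List A, evalWord a w = g)
    (δ : ℝ) (hhyp : FourPointHyperbolic a δ)
    (f : G →* Multiplicative ℤ) (hf : Function.Surjective f)
    (N : Subgroup G) (hN : N = f.ker) (hNinf : Infinite N) :
    ¬ ∃ ε : ℝ, 0 < ε ∧ ∀ g ∈ N, ∀ h ∈ N, ∀ w : List A,
        evalWord a w = g⁻¹ * h → w.length = wlen a (g⁻¹ * h) →
        ∀ p : List A, p <+: w →
          ∃ u : List A, (u.length : ℝ) ≤ ε ∧ g * evalWord a p * evalWord a u ∈ N := by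
  rintro ⟨ε, -, hQ⟩
  subst hN
  obtain ⟨C, hC0, hC⟩ := exists_abs_toAdd_evalWord_le a f
  have hbdd : ∀ {w : List A}, IsGeodesicWord a w → evalWord a w ∈ f.ker →
      ∀ j, |((f (evalWord a (w.take j))).toAdd : ℝ)| ≤ C * ε := by
    intro w hw hwN j
    obtain ⟨u, hu, huN⟩ := hQ 1 (one_mem _) _ hwN w (by rw [inv_one, one_mul])
      (by rw [inv_one, one_mul]; exact hw) _ (w.take_prefix j)
    rw [one_mul, MonoidHom.mem_ker, map_mul] at huN
    rw [eq_inv_of_mul_eq_one_left huN, toAdd_inv, Int.cast_neg, abs_neg]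
    exact (hC u).trans (mul_le_mul_of_nonneg_left hu hC0)
  obtain ⟨t, ht⟩ := hf (Multiplicative.ofAdd 1)
  obtain ⟨m, hm⟩ := exists_nat_gt (C * (2 * ε + 4 * δ + 1))
  set g := t ^ m
  obtain ⟨n, hn⟩ := exists_nat_gt (2 * (wlen a g : ℝ) + 4 * δ + 1)
  obtain ⟨h, hhN, hlong⟩ := (Set.infinite_coe_iff.mp hNinf).exists_lt_wlen hgen n
  obtain ⟨wh, rfl, hwh⟩ := exists_evalWord_eq_length_eq_wlen hgen h
  obtain ⟨wy, hy, hwy⟩ := exists_evalWord_eq_length_eq_wlen hgen (g * evalWord a wh * g⁻¹)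
  have hwh' : IsGeodesicWord a wh := hwh
  have hwy' : IsGeodesicWord a wy := isGeodesicWord_of_length_eq_wlen hy hwy
  obtain ⟨j, hj⟩ := hhyp.exists_wdist_conj_le hinv hgen hwh' hwy' hy
    (by rw [hwh]; exact hn.trans (by exact_mod_cast hlong))
  have hyN : evalWord a wy ∈ f.ker := hy ▸ f.normal_ker.conj_mem _ hhN g
  have hμ := hbdd hwh' hhN (wh.length / 2)
  have hq := hbdd hwy' hyN j
  have hlip := abs_toAdd_sub_le_mul_wdist hgen hC (g * evalWord a (wh.take (wh.length / 2)))
    (evalWord a (wy.take j))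
  have hgx : ∀ x, ((f (g * x)).toAdd : ℝ) = m + (f x).toAdd := by
    intro x
    simp [g, ht]
  rw [hgx] at hlip
  have hnear := mul_le_mul_of_nonneg_left hj hC0
  rw [abs_le] at hμ hq hlip
  linarith

/-- An infinite normal subgroup `N` of a word hyperbolic group `G` with `G/N ≅ ℤ` is not a
quasiconvex subset of the Cayley graph: no `ε`-neighborhood of `N` contains all geodesics
between points of `N`. -/
theorem infinite_normal_kernel_not_quasiconvex
    {A G : Type} [Fintype A] [Group G] (a : A → G)
    (hinv : ∀ x : A, ∃ y : A, a y = (a x)⁻¹)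
    (hgen : ∀ g : G, ∃ w : List A, evalWord a w = g)
    (δ : ℝ) (hδ : 0 ≤ δ) (hhyp : FourPointHyperbolic a δ)
    (f : G →* Multiplicative ℤ) (hf : Function.Surjective f)
    (N : Subgroup G) (hN : N = f.ker) (hNinf : Infinite N) :
    ¬ ∃ ε : ℝ, 0 < ε ∧ ∀ g ∈ N, ∀ h ∈ N, ∀ w : List A,
        evalWord a w = g⁻¹ * h → w.length = wlen a (g⁻¹ * h) →
        ∀ p : List A, p <+: w →
          ∃ u : List A, (u.length : ℝ) ≤ ε ∧ g * evalWord a p * evalWord a u ∈ N :=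
  infinite_normal_kernel_not_quasiconvex_general a hinv hgen δ hhyp f hf N hN hNinf
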